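/- Let W be a separable Banach space, H a Hilbert space with W densely and continuously embedded in H (constant C_W: ‖z‖_H ≤ C_W ‖z‖_W), and suppose the embedding H ⊆ W* is compact. Let M₁ > 0 and let (u_n) be a sequence of functions from [0,T] to H such that ‖u_n(t)‖_H ≤ M₁ for all t and the total variation of u_n as a W*-valued function is at most M₁ for every n. Then there exist a subsequence (u_{n_k}) and a function u : [0,T] → H with ‖u(t)‖_H ≤ M₁ for all t, such that u_{n_k}(t) → u(t) weakly in H for every t ∈ [0,T]. -/

import Mathlib

open MeasureTheory Filter Topology
open scoped Pointwise ENNReal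

set_option maxHeartbeats 2000000 in
/-- Helly-type selection (Lemma 2.2): a sequence of H-valued functions bounded in H
and with uniformly bounded total variation as W*-valued functions has a subsequence
converging weakly in H at every time t. -/
theorem stmt5 {W H : Type*} [NormedAddCommGroup W] [NormedSpace ℝ W]
    [TopologicalSpace.SeparableSpace W]
    [NormedAddCommGroup H] [InnerProductSpace ℝ H] [CompleteSpace H]
    (k : W →L[ℝ] H) (hdense : DenseRange k) (C_W : ℝ)
    (hCW : ∀ z : W, ‖k z‖ ≤ C_W * ‖z‖)
    (j : H → (W →L[ℝ] ℝ))
    (hj : ∀ (h : H) (ξ : W), j h ξ = (inner ℝ h (k ξ) : ℝ))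
    (hcompact : IsCompactOperator j)
    (T M₁ : ℝ) (hT : 0 < T) (hM₁ : 0 < M₁)
    (u : ℕ → ℝ → H)
    (hbdd : ∀ n, ∀ t ∈ Set.Icc (0:ℝ) T, ‖u n t‖ ≤ M₁)
    (hvar : ∀ n (m : ℕ) (τ : Fin (m+1) → ℝ), Monotone τ →
      (∀ i, τ i ∈ Set.Icc (0:ℝ) T) →
      ∑ i : Fin m, ‖j (u n (τ i.succ)) - j (u n (τ i.castSucc))‖ ≤ M₁) :
    ∃ φ : ℕ → ℕ, StrictMono φ ∧ ∃ v : ℝ → H,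
      (∀ t ∈ Set.Icc (0:ℝ) T, ‖v t‖ ≤ M₁) ∧
      ∀ t ∈ Set.Icc (0:ℝ) T, ∀ h : H,
        Tendsto (fun m => (inner ℝ (u (φ m) t) h : ℝ)) atTop (𝓝 (inner ℝ (v t) h)) := by
  classical
  set f : ℕ → ℝ → (W →L[ℝ] ℝ) := fun n t => j (u n t) with hfdef
  -- j is homogeneous
  have hj_smul : ∀ (c : ℝ) (x : H), j (c • x) = c • j x := by
    intro c x
    ext ξ
    rw [ContinuousLinearMap.smul_apply, hj, hj, real_inner_smul_left, smul_eq_mul]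
  -- a compact set containing j '' closedBall 0 M₁
  obtain ⟨K, hKc, hKnhds⟩ := hcompact
  obtain ⟨r, hr, hrK⟩ := Metric.mem_nhds_iff.mp hKnhds
  set cc : ℝ := 2 * M₁ / r with hccdef
  have hcc : 0 < cc := by positivity
  have hK' : IsCompact (cc • K) := hKc.smul cc
  have hmemK' : ∀ x : H, ‖x‖ ≤ M₁ → j x ∈ cc • K := by
    intro x hx
    have h1 : (r / (2 * M₁)) • x ∈ Metric.ball (0 : H) r := by
      rw [mem_ball_zero_iff, norm_smul, Real.norm_eq_abs,
        abs_of_nonneg (by positivity : (0:ℝ) ≤ r / (2 * M₁))]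
      have h2 : r / (2 * M₁) * ‖x‖ ≤ r / (2 * M₁) * M₁ :=
        mul_le_mul_of_nonneg_left hx (by positivity)
      have h3 : r / (2 * M₁) * M₁ = r / 2 := by
        rw [div_mul_eq_mul_div, mul_comm r M₁, mul_comm 2 M₁,
          mul_div_mul_left r 2 (ne_of_gt hM₁)]
      linarith
    have h2 : j ((r / (2 * M₁)) • x) ∈ K := hrK h1
    have hone : cc * (r / (2 * M₁)) = 1 := by
      rw [hccdef]
      field_simp
    have hjx : j x = cc • j ((r / (2 * M₁)) • x) := by
      rw [← hj_smul, smul_smul, hone, one_smul]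
    rw [hjx]
    exact Set.smul_mem_smul_set h2
  -- variation functions
  set V : ℕ → ℝ → ℝ≥0∞ := fun n x =>
    eVariationOn (f n) (Set.Icc 0 T ∩ Set.Icc 0 x) with hVdef
  have hVtop : ∀ n x, V n x ≤ ENNReal.ofReal M₁ := by
    intro n x
    refine le_trans (eVariationOn.mono _ Set.inter_subset_left) ?_
    refine iSup_le ?_
    rintro ⟨m, τ, hτmono, hτmem⟩
    have hmono : Monotone fun i : Fin (m+1) => τ (i : ℕ) := by
      intro i j hij
      exact hτmono (by exact_mod_cast hij)
    have hvm := hvar n m (fun i : Fin (m+1) => τ (i : ℕ)) hmono (fun i => hτmem _)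
    have hsum : ∑ i : Fin m, ‖j (u n (τ ((i : ℕ) + 1))) - j (u n (τ (i : ℕ)))‖ ≤ M₁ := by
      simpa using hvm
    calc ∑ i ∈ Finset.range m, edist (f n (τ (i + 1))) (f n (τ i))
        = ENNReal.ofReal (∑ i ∈ Finset.range m, ‖f n (τ (i + 1)) - f n (τ i)‖) := by
          rw [ENNReal.ofReal_sum_of_nonneg (fun i _ => norm_nonneg _)]
          refine Finset.sum_congr rfl fun i _ => ?_
          rw [edist_dist, dist_eq_norm, ENNReal.ofReal]
      _ ≤ ENNReal.ofReal M₁ := by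
          refine ENNReal.ofReal_le_ofReal ?_
          calc ∑ i ∈ Finset.range m, ‖f n (τ (i + 1)) - f n (τ i)‖
              = ∑ i : Fin m, ‖j (u n (τ ((i : ℕ) + 1))) - j (u n (τ (i : ℕ)))‖ :=
                (Fin.sum_univ_eq_sum_range (fun i => ‖f n (τ (i + 1)) - f n (τ i)‖) m).symm
            _ ≤ M₁ := hsum
  have hVne : ∀ n x, V n x ≠ ⊤ := fun n x =>
    ne_top_of_le_ne_top ENNReal.ofReal_ne_top (hVtop n x)
  set Vr : ℕ → ℝ → ℝ := fun n x => (V n x).toReal with hVrdef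
  have hVmono : ∀ n, ∀ x y : ℝ, x ≤ y → V n x ≤ V n y := by
    intro n x y hxy
    exact eVariationOn.mono _ (Set.inter_subset_inter_right _ (Set.Icc_subset_Icc_right hxy))
  have hVrmono : ∀ n, Monotone (Vr n) := by
    intro n x y hxy
    exact ENNReal.toReal_mono (hVne n y) (hVmono n x y hxy)
  have hVr_mem : ∀ n x, Vr n x ∈ Set.Icc (0:ℝ) M₁ :=
    fun n x => ⟨ENNReal.toReal_nonneg, ENNReal.toReal_le_of_le_ofReal hM₁.le (hVtop n x)⟩
  -- key variation estimate
  have hkey : ∀ n, ∀ s t : ℝ, s ∈ Set.Icc (0:ℝ) T → t ∈ Set.Icc (0:ℝ) T → s ≤ t →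
      dist (f n t) (f n s) ≤ Vr n t - Vr n s := by
    intro n s t hs ht hst
    have h1 : V n s + eVariationOn (f n) (Set.Icc 0 T ∩ Set.Icc s t) = V n t :=
      eVariationOn.Icc_add_Icc (f n) hs.1 hst hs
    have hmidne : eVariationOn (f n) (Set.Icc 0 T ∩ Set.Icc s t) ≠ ⊤ := by
      intro hc
      rw [hc, add_top] at h1
      exact hVne n t h1.symm
    have h2 : edist (f n t) (f n s) ≤ eVariationOn (f n) (Set.Icc 0 T ∩ Set.Icc s t) :=
      eVariationOn.edist_le _ ⟨ht, hst, le_rfl⟩ ⟨hs, le_rfl, hst⟩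
    have h3 : Vr n t - Vr n s = (eVariationOn (f n) (Set.Icc 0 T ∩ Set.Icc s t)).toReal := by
      have := congrArg ENNReal.toReal h1
      rw [ENNReal.toReal_add (hVne n s) hmidne] at this
      simp only [hVrdef]
      linarith [this]
    rw [h3, dist_edist]
    exact ENNReal.toReal_mono hmidne h2
  -- the countable dense set Q
  set Q : Set ℝ := (Set.range ((↑) : ℚ → ℝ) ∪ {0, T}) ∩ Set.Icc 0 T with hQdef
  have hQcount : Q.Countable :=
    Set.Countable.mono Set.inter_subset_left
      ((Set.countable_range _).union ((Set.finite_singleton T).insert 0).countable)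
  have hQIcc : Q ⊆ Set.Icc (0:ℝ) T := Set.inter_subset_right
  have h0Q : (0:ℝ) ∈ Q := ⟨Or.inr (Or.inl rfl), le_rfl, hT.le⟩
  have hTQ : T ∈ Q := ⟨Or.inr (Or.inr rfl), hT.le, le_rfl⟩
  haveI : Countable Q := hQcount.to_subtype
  -- Round 1 extraction: convergence at points of Q, of both f and Vr
  set F : ℕ → (Q → (W →L[ℝ] ℝ)) × (Q → ℝ) :=
    fun n => (fun q : Q => f n q, fun q : Q => Vr n q) with hFdef
  have hS1 : IsCompact ((Set.univ.pi fun _ : Q => cc • K) ×ˢ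
      (Set.univ.pi fun _ : Q => Set.Icc (0:ℝ) M₁)) :=
    (isCompact_univ_pi fun _ => hK').prod (isCompact_univ_pi fun _ => isCompact_Icc)
  have hmem1 : ∀ n, F n ∈ (Set.univ.pi fun _ : Q => cc • K) ×ˢ
      (Set.univ.pi fun _ : Q => Set.Icc (0:ℝ) M₁) := by
    intro n
    constructor
    · intro q _
      exact hmemK' _ (hbdd n q (hQIcc q.2))
    · intro q _
      exact hVr_mem n q
  obtain ⟨⟨g, Vl⟩, hgS1, φ₁, hφ₁, hconv1⟩ := hS1.tendsto_subseq hmem1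
  have hg : ∀ q : Q, Tendsto (fun n => f (φ₁ n) q) atTop (𝓝 (g q)) := by
    intro q
    have h1 : Tendsto (fun n => (F (φ₁ n)).1) atTop (𝓝 g) :=
      (continuous_fst.tendsto _).comp hconv1
    exact (tendsto_pi_nhds.mp h1) q
  have hVl : ∀ q : Q, Tendsto (fun n => Vr (φ₁ n) q) atTop (𝓝 (Vl q)) := by
    intro q
    have h1 : Tendsto (fun n => (F (φ₁ n)).2) atTop (𝓝 Vl) :=
      (continuous_snd.tendsto _).comp hconv1
    exact (tendsto_pi_nhds.mp h1) q
  have hVl01 : ∀ q : Q, Vl q ∈ Set.Icc (0:ℝ) M₁ := fun q => hgS1.2 q (Set.mem_univ _)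
  have hVlmono : ∀ q q' : Q, (q:ℝ) ≤ (q':ℝ) → Vl q ≤ Vl q' := fun q q' h =>
    le_of_tendsto_of_tendsto' (hVl q) (hVl q') (fun n => hVrmono _ h)
  -- monotone envelope
  set Vt : ℝ → ℝ := fun x => sSup (Vl '' {q : Q | (q:ℝ) ≤ x}) with hVtdef
  have hSxb : ∀ x : ℝ, BddAbove (Vl '' {q : Q | (q:ℝ) ≤ x}) := by
    intro x
    refine ⟨M₁, ?_⟩
    rintro _ ⟨q, _, rfl⟩
    exact (hVl01 q).2
  have hVtmono : Monotone Vt := by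
    intro x y hxy
    rcases (Vl '' {q : Q | (q:ℝ) ≤ x}).eq_empty_or_nonempty with he | hne
    · rw [hVtdef]
      simp only []
      rw [he, Real.sSup_empty]
      rcases (Vl '' {q : Q | (q:ℝ) ≤ y}).eq_empty_or_nonempty with he' | hne'
      · rw [he', Real.sSup_empty]
      · obtain ⟨rr, hrr⟩ := hne'
        have h0 : 0 ≤ rr := by
          obtain ⟨q, _, rfl⟩ := hrr
          exact (hVl01 q).1
        exact le_csSup_of_le (hSxb y) hrr h0
    · exact csSup_le_csSup (hSxb y)  hne
        (Set.image_mono fun q hq => le_trans hq hxy)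
  have hVtQ : ∀ q : Q, Vt q = Vl q := by
    intro q
    refine IsGreatest.csSup_eq ⟨⟨q, by simp, rfl⟩, ?_⟩
    rintro _ ⟨q', hq', rfl⟩
    exact hVlmono q' q hq'
  -- Round 2 extraction on discontinuity points
  set E2 : Set ℝ := {x : ℝ | ¬ ContinuousAt Vt x} ∩ Set.Icc 0 T with hE2def
  have hE2count : E2.Countable :=
    Set.Countable.mono Set.inter_subset_left hVtmono.countable_not_continuousAt
  haveI : Countable E2 := hE2count.to_subtype
  have hS2 : IsCompact (Set.univ.pi fun _ : E2 => cc • K) := isCompact_univ_pi fun _ => hK'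
  have hmem2 : ∀ n, (fun e : E2 => f (φ₁ n) e) ∈ Set.univ.pi fun _ : E2 => cc • K := by
    intro n e _
    exact hmemK' _ (hbdd _ _ e.2.2)
  obtain ⟨g2, _, φ₂, hφ₂, hconv2⟩ := hS2.tendsto_subseq hmem2
  set ψ : ℕ → ℕ := φ₁ ∘ φ₂ with hψdef
  have hψ : StrictMono ψ := hφ₁.comp hφ₂
  have hg2 : ∀ e : E2, Tendsto (fun n => f (ψ n) e) atTop (𝓝 (g2 e)) :=
    fun e => (tendsto_pi_nhds.mp hconv2) e
  -- W*-norm convergence at every t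
  have hWconv : ∀ t ∈ Set.Icc (0:ℝ) T, ∃ w : W →L[ℝ] ℝ,
      Tendsto (fun n => f (ψ n) t) atTop (𝓝 w) := by
    intro t ht
    by_cases htE : t ∈ E2
    · exact ⟨g2 ⟨t, htE⟩, hg2 _⟩
    by_cases htQ : t ∈ Q
    · exact ⟨g ⟨t, htQ⟩, (hg ⟨t, htQ⟩).comp hφ₂.tendsto_atTop⟩
    have hcont : ContinuousAt Vt t := by
      by_contra hc
      exact htE ⟨hc, ht⟩
    have hC : CauchySeq fun n => f (ψ n) t := by
      rw [Metric.cauchySeq_iff]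
      intro ε hε
      obtain ⟨δ, hδ, hδ2⟩ := Metric.continuousAt_iff.mp hcont (ε/16) (by positivity)
      obtain ⟨s, hsQ, hst, hsd⟩ : ∃ s, s ∈ Q ∧ s ≤ t ∧ dist s t < δ := by
        rcases eq_or_lt_of_le ht.1 with h0 | h0
        · exact ⟨0, h0Q, h0.le, by rw [← h0]; simpa using hδ⟩
        · obtain ⟨q, hq1, hq2⟩ := exists_rat_btwn (show max (t - δ) 0 < t by
            apply max_lt <;> linarith)
          have hq0 : (0:ℝ) ≤ q := le_of_lt (lt_of_le_of_lt (le_max_right _ _) hq1)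
          refine ⟨q, ⟨Or.inl ⟨q, rfl⟩, hq0, le_trans hq2.le ht.2⟩, hq2.le, ?_⟩
          rw [Real.dist_eq, abs_of_nonpos (by linarith)]
          have := lt_of_le_of_lt (le_max_left _ _) hq1
          linarith
      obtain ⟨s', hs'Q, hts', hs'd⟩ : ∃ s', s' ∈ Q ∧ t ≤ s' ∧ dist s' t < δ := by
        rcases eq_or_lt_of_le ht.2 with h0 | h0
        · exact ⟨T, hTQ, h0.le, by rw [h0]; simpa using hδ⟩
        · obtain ⟨q, hq1, hq2⟩ := exists_rat_btwn (show t < min (t + δ) T by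
            apply lt_min <;> linarith)
          have hqT : (q:ℝ) ≤ T := le_of_lt (lt_of_lt_of_le hq2 (min_le_right _ _))
          refine ⟨q, ⟨Or.inl ⟨q, rfl⟩, le_trans ht.1 hq1.le, hqT⟩, hq1.le, ?_⟩
          rw [Real.dist_eq, abs_of_nonneg (by linarith)]
          have := lt_of_lt_of_le hq2 (min_le_left _ _)
          linarith
      have hss' : Vl ⟨s', hs'Q⟩ - Vl ⟨s, hsQ⟩ < ε/8 := by
        have h1 : dist (Vt s) (Vt t) < ε/16 := hδ2 hsd
        have h2 : dist (Vt s') (Vt t) < ε/16 := hδ2 hs'd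
        rw [Real.dist_eq] at h1 h2
        have e1 : Vt s = Vl ⟨s, hsQ⟩ := hVtQ ⟨s, hsQ⟩
        have e2 : Vt s' = Vl ⟨s', hs'Q⟩ := hVtQ ⟨s', hs'Q⟩
        rw [e1] at h1
        rw [e2] at h2
        have := abs_lt.mp h1
        have := abs_lt.mp h2
        cases abs_lt.mp h1 with
        | intro a b => cases abs_lt.mp h2 with
          | intro a' b' => linarith
      have hVs : Tendsto (fun n => Vr (ψ n) s) atTop (𝓝 (Vl ⟨s, hsQ⟩)) :=
        (hVl ⟨s, hsQ⟩).comp hφ₂.tendsto_atTop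
      have hVs' : Tendsto (fun n => Vr (ψ n) s') atTop (𝓝 (Vl ⟨s', hs'Q⟩)) :=
        (hVl ⟨s', hs'Q⟩).comp hφ₂.tendsto_atTop
      have hgs : Tendsto (fun n => f (ψ n) s) atTop (𝓝 (g ⟨s, hsQ⟩)) :=
        (hg ⟨s, hsQ⟩).comp hφ₂.tendsto_atTop
      obtain ⟨N1, hN1⟩ := (Metric.tendsto_atTop.mp hVs) (ε/8) (by positivity)
      obtain ⟨N2, hN2⟩ := (Metric.tendsto_atTop.mp hVs') (ε/8) (by positivity)
      obtain ⟨N3, hN3⟩ := (Metric.tendsto_atTop.mp hgs) (ε/8) (by positivity)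
      refine ⟨max N1 (max N2 N3), ?_⟩
      intro m hm n hn
      have hsIcc : s ∈ Set.Icc (0:ℝ) T := hQIcc hsQ
      have hs'Icc : s' ∈ Set.Icc (0:ℝ) T := hQIcc hs'Q
      have est : ∀ p, N1 ≤ p → N2 ≤ p → dist (f (ψ p) t) (f (ψ p) s) < 3*ε/8 := by
        intro p hp1 hp2
        have e1 : dist (f (ψ p) t) (f (ψ p) s) ≤ Vr (ψ p) t - Vr (ψ p) s :=
          hkey _ s t hsIcc ht hst
        have e2 : Vr (ψ p) t ≤ Vr (ψ p) s' := hVrmono _ hts'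
        have e3 := hN1 p hp1
        have e4 := hN2 p hp2
        rw [Real.dist_eq] at e3 e4
        cases abs_lt.mp e3 with
        | intro a b => cases abs_lt.mp e4 with
          | intro a' b' => linarith
      have hm1 : N1 ≤ m := le_trans (le_max_left _ _) hm
      have hm2 : N2 ≤ m := le_trans (le_trans (le_max_left _ _) (le_max_right _ _)) hm
      have hm3 : N3 ≤ m := le_trans (le_trans (le_max_right _ _) (le_max_right _ _)) hm
      have hn1 : N1 ≤ n := le_trans (le_max_left _ _) hn
      have hn2 : N2 ≤ n := le_trans (le_trans (le_max_left _ _) (le_max_right _ _)) hn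
      have hn3 : N3 ≤ n := le_trans (le_trans (le_max_right _ _) (le_max_right _ _)) hn
      calc dist (f (ψ m) t) (f (ψ n) t)
          ≤ dist (f (ψ m) t) (f (ψ m) s) + dist (f (ψ m) s) (f (ψ n) s)
            + dist (f (ψ n) s) (f (ψ n) t) := dist_triangle4 _ _ _ _
        _ ≤ dist (f (ψ m) t) (f (ψ m) s)
            + (dist (f (ψ m) s) (g ⟨s, hsQ⟩) + dist (g ⟨s, hsQ⟩) (f (ψ n) s))
            + dist (f (ψ n) s) (f (ψ n) t) := by
              gcongr
              exact dist_triangle _ _ _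
        _ < 3*ε/8 + (ε/8 + ε/8) + 3*ε/8 := by
            have d1 := est m hm1 hm2
            have d2 := est n hn1 hn2
            have d3 := hN3 m hm3
            have d4 := hN3 n hn3
            rw [dist_comm (f (ψ n) s) (f (ψ n) t)]
            rw [dist_comm (g ⟨s, hsQ⟩) (f (ψ n) s)]
            gcongr
        _ = ε := by ring
    exact cauchySeq_tendsto_of_complete hC
  -- construct the weak limit via Riesz representation
  have main : ∀ t ∈ Set.Icc (0:ℝ) T, ∃ x : H, ‖x‖ ≤ M₁ ∧
      ∀ h : H, Tendsto (fun n => (inner ℝ (u (ψ n) t) h : ℝ)) atTop (𝓝 (inner ℝ x h)) := by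
    intro t ht
    obtain ⟨w, hw⟩ := hWconv t ht
    have hlim : ∀ h : H, ∃ l : ℝ,
        Tendsto (fun n => (inner ℝ (u (ψ n) t) h : ℝ)) atTop (𝓝 l) := by
      intro h
      have hC : CauchySeq fun n => (inner ℝ (u (ψ n) t) h : ℝ) := by
        rw [Metric.cauchySeq_iff]
        intro ε hε
        obtain ⟨ξ, hξ⟩ := Metric.denseRange_iff.mp hdense h (ε / (4 * M₁ + 1)) (by positivity)
        have h1 : Tendsto (fun n => (inner ℝ (u (ψ n) t) (k ξ) : ℝ)) atTop (𝓝 (w ξ)) := by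
          have h2 := ((ContinuousLinearMap.apply ℝ ℝ ξ).continuous.tendsto w).comp hw
          have h3 : (fun n => f (ψ n) t ξ) = fun n => (inner ℝ (u (ψ n) t) (k ξ) : ℝ) := by
            funext n
            exact hj _ _
          rw [← h3]
          exact h2
        obtain ⟨N, hN⟩ := (Metric.tendsto_atTop.mp h1) (ε/8) (by positivity)
        refine ⟨N, fun m hm n hn => ?_⟩
        have key : ∀ p, |(inner ℝ (u (ψ p) t) h : ℝ) - inner ℝ (u (ψ p) t) (k ξ)| ≤ ε/4 := by
          intro p
          rw [← inner_sub_right]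
          calc |(inner ℝ (u (ψ p) t) (h - k ξ) : ℝ)| ≤ ‖u (ψ p) t‖ * ‖h - k ξ‖ :=
              abs_real_inner_le_norm _ _
            _ ≤ M₁ * (ε / (4 * M₁ + 1)) := by
                refine mul_le_mul (hbdd _ _ ht) ?_ (norm_nonneg _) hM₁.le
                rw [← dist_eq_norm]
                exact hξ.le
            _ ≤ ε/4 := by
                rw [mul_div_assoc', div_le_div_iff₀ (by positivity) (by norm_num)]
                nlinarith
        have d1 := hN m hm
        have d2 := hN n hn
        rw [Real.dist_eq] at d1 d2 ⊢
        have k1 := key m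
        have k2 := key n
        have habs : |(inner ℝ (u (ψ m) t) h : ℝ) - inner ℝ (u (ψ n) t) h| ≤
            |(inner ℝ (u (ψ m) t) h : ℝ) - inner ℝ (u (ψ m) t) (k ξ)|
            + |(inner ℝ (u (ψ m) t) (k ξ) : ℝ) - w ξ|
            + |w ξ - (inner ℝ (u (ψ n) t) (k ξ) : ℝ)|
            + |(inner ℝ (u (ψ n) t) (k ξ) : ℝ) - inner ℝ (u (ψ n) t) h| := by
          have := abs_sub_le ((inner ℝ (u (ψ m) t) h : ℝ)) ((inner ℝ (u (ψ n) t) (k ξ) : ℝ))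
            ((inner ℝ (u (ψ n) t) h : ℝ))
          have h4 := abs_sub_le ((inner ℝ (u (ψ m) t) h : ℝ)) ((inner ℝ (u (ψ m) t) (k ξ) : ℝ))
            ((inner ℝ (u (ψ n) t) (k ξ) : ℝ))
          have h5 := abs_sub_le ((inner ℝ (u (ψ m) t) (k ξ) : ℝ)) (w ξ)
            ((inner ℝ (u (ψ n) t) (k ξ) : ℝ))
          linarith
        have habs2 : |w ξ - (inner ℝ (u (ψ n) t) (k ξ) : ℝ)| =
            |(inner ℝ (u (ψ n) t) (k ξ) : ℝ) - w ξ| := abs_sub_comm _ _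
        have habs3 : |(inner ℝ (u (ψ n) t) (k ξ) : ℝ) - inner ℝ (u (ψ n) t) h| =
            |(inner ℝ (u (ψ n) t) h : ℝ) - inner ℝ (u (ψ n) t) (k ξ)| := abs_sub_comm _ _
        rw [habs2, habs3] at habs
        linarith
      exact cauchySeq_tendsto_of_complete hC
    choose L hL using hlim
    have hadd : ∀ a b : H, L (a + b) = L a + L b := by
      intro a b
      have h1 := (hL a).add (hL b)
      have h2 : (fun n => (inner ℝ (u (ψ n) t) a : ℝ) + (inner ℝ (u (ψ n) t) b : ℝ)) =
          fun n => (inner ℝ (u (ψ n) t) (a + b) : ℝ) := by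
        funext n
        rw [inner_add_right]
      rw [h2] at h1
      exact tendsto_nhds_unique (hL (a + b)) h1
    have hsmul : ∀ (c : ℝ) (a : H), L (c • a) = c * L a := by
      intro c a
      have h1 := (hL a).const_mul c
      have h2 : (fun n => c * (inner ℝ (u (ψ n) t) a : ℝ)) =
          fun n => (inner ℝ (u (ψ n) t) (c • a) : ℝ) := by
        funext n
        rw [real_inner_smul_right]
      rw [h2] at h1
      exact tendsto_nhds_unique (hL (c • a)) h1
    have hbound : ∀ a : H, |L a| ≤ M₁ * ‖a‖ := by
      intro a
      refine le_of_tendsto (hL a).abs (Eventually.of_forall fun n => ?_)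
      exact (abs_real_inner_le_norm _ _).trans
        (mul_le_mul_of_nonneg_right (hbdd _ _ ht) (norm_nonneg _))
    set Lm : H →ₗ[ℝ] ℝ :=
      { toFun := L
        map_add' := hadd
        map_smul' := fun c x => hsmul c x } with hLmdef
    set Lc : H →L[ℝ] ℝ := LinearMap.mkContinuous Lm M₁
      (fun a => by rw [Real.norm_eq_abs]; exact hbound a) with hLcdef
    refine ⟨(InnerProductSpace.toDual ℝ H).symm Lc, ?_, ?_⟩
    · rw [LinearIsometryEquiv.norm_map]
      exact LinearMap.mkContinuous_norm_le Lm hM₁.le _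
    · intro h
      have he : (inner ℝ ((InnerProductSpace.toDual ℝ H).symm Lc) h : ℝ) = Lc h :=
        InnerProductSpace.toDual_symm_apply
      rw [he]
      exact hL h
  choose! v hv1 hv2 using main
  exact ⟨ψ, hψ, v, hv1, hv2⟩
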